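/- arXiv:2403.08884 — 3 statements merged into one kernel-verified Lean document; each statement's English description precedes it below -/
import Mathlib

section
/- For every substitution ζ on the alphabet {1,…,d}, ∫_{𝕋^d} log‖𝓜_ζ(t)‖_F dm_d(t) ≤ (1/2)·log(Σ_{b,c} S_ζ(b,c)), i.e. the average of log of the Frobenius norm of 𝓜_ζ over the torus is at most half the logarithm of the sum of all entries of the substitution matrix S_ζ. -/
open MeasureTheory

noncomputable section

/-- The spectral-cocycle matrix `𝓜_ζ(t)` of a substitution `ζ` on the alphabet `{1,…,d}`
(letters modelled as `Fin d`, a substitution as a map `Fin d → List (Fin d)`):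
`(𝓜_ζ(t))_{b,c} = Σ_{j ≤ |ζ(b)|, u_j^b = c} exp(−2πi Σ_{k<j} t_{u_k^b})`. -/
def specMat {d : ℕ} (ζ : Fin d → List (Fin d)) (t : Fin d → ℝ) :
    Matrix (Fin d) (Fin d) ℂ := fun b c =>
  ∑ j : Fin (ζ b).length,
    if (ζ b).get j = c then
      Complex.exp (-(2 * Real.pi * Complex.I) *
        ((((ζ b).take (j : ℕ)).map t).sum : ℝ))
    else 0

/-- The Frobenius norm of a complex matrix. -/
def frobNorm {d : ℕ} (M : Matrix (Fin d) (Fin d) ℂ) : ℝ :=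
  Real.sqrt (∑ b, ∑ c, ‖M b c‖ ^ 2)

/-- The Haar probability measure of the torus `𝕋^d = ℝ^d/ℤ^d`, transported to the
fundamental domain `(0,1]^d`: integrating a `ℤ^d`-periodic function on `ℝ^d` against it
is exactly integration over `𝕋^d` with respect to `m_d`. -/
def haarCube (d : ℕ) : Measure (Fin d → ℝ) :=
  Measure.pi fun _ => (volume : Measure ℝ).restrict (Set.Ioc (0 : ℝ) 1)

/-- The substitution matrix `S_ζ(i,j) =` number of occurrences of the letter `i`
in the word `ζ(j)` (here with real entries). -/
def subMat {d : ℕ} (ζ : Fin d → List (Fin d)) : Matrix (Fin d) (Fin d) ℝ :=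
  fun i j => ((ζ j).count i : ℝ)

/-! Each entry of `specMat ζ t` is a sum of distinct characters `t ↦ e^{-2πi⟨m, t⟩}` of the
torus, the frequencies `m` being the letter counts of the prefixes of the word `ζ b`. By
orthonormality of the characters, `∫ ‖specMat ζ t‖_F² = ∑ S_ζ(b,c) =: S`, and Jensen's inequality
for `log`, in the form of the tangent line of `log` at `S`, gives `∫ log ‖specMat ζ t‖_F² ≤ log S`.

Since `Real.log 0 = 0`, the tangent line bounds `log` at `0` only when `log S ≥ 1`. Otherwise the
first word has at most two letters, so its row of `specMat ζ t` has an entry equal to `1` or to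
`1 + e^{-2πi t_x}`, and the Frobenius norm vanishes only on a null set. -/

open Real UnitAddTorus

instance : IsProbabilityMeasure ((volume : Measure ℝ).restrict (Set.Ioc (0 : ℝ) 1)) :=
  ⟨by simp⟩

instance (d : ℕ) : IsProbabilityMeasure (haarCube d) := by
  unfold haarCube; infer_instance

theorem integral_log_le_log_integral {α : Type*} [MeasurableSpace α] {μ : Measure α}
    [IsProbabilityMeasure μ] {f : α → ℝ} (hf : Integrable f μ) (hf0 : 0 ≤ᵐ[μ] f)
    (h1 : 1 ≤ ∫ x, f x ∂μ) (hpos : (∀ᵐ x ∂μ, 0 < f x) ∨ 1 ≤ log (∫ x, f x ∂μ)) :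
    ∫ x, log (f x) ∂μ ≤ log (∫ x, f x ∂μ) := by
  set L := ∫ x, f x ∂μ
  have hL : 0 < L := by linarith
  have tangent {y : ℝ} (hy : 0 < y) : log y ≤ y / L + (log L - 1) := by
    have := log_le_sub_one_of_pos (div_pos hy hL)
    rw [log_div hy.ne' hL.ne'] at this
    linarith
  have htangent : ∀ᵐ x ∂μ, log (f x) ≤ f x / L + (log L - 1) := by
    rcases hpos with hpos | hlog
    · filter_upwards [hpos] with x hx using tangent hx
    · filter_upwards [hf0] with x hx
      rcases (show 0 ≤ f x from hx).eq_or_lt with h | h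
      · rw [← h, log_zero, zero_div]; linarith
      · exact tangent h
  by_cases hlog : Integrable (fun x => log (f x)) μ
  · calc ∫ x, log (f x) ∂μ ≤ ∫ x, (f x / L + (log L - 1)) ∂μ :=
          integral_mono_ae hlog ((hf.div_const L).add (integrable_const _)) htangent
      _ = log L := by
          rw [integral_add (hf.div_const L) (integrable_const _), integral_div, integral_const,
            div_self hL.ne']
          simp
  · rw [integral_undef hlog]
    exact log_nonneg h1

theorem integral_norm_sq_sum_mFourier {ι δ : Type*} [Fintype δ] {n : ι → δ → ℤ}
    (hn : Function.Injective n) (s : Finset ι) :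
    ∫ x, ‖∑ j ∈ s, mFourier (n j) x‖ ^ 2 ∂(Measure.pi fun _ => AddCircle.haarAddCircle) =
      s.card := by
  have key : inner ℂ (∑ j ∈ s, mFourierLp 2 (n j)) (∑ j ∈ s, mFourierLp 2 (n j)) = s.card := by
    simp_rw [sum_inner, inner_sum]
    rw [Finset.sum_comm]
    simpa using (orthonormal_mFourier.comp n hn).inner_left_right_finset (s := s)
      (a := fun _ _ => (1 : ℂ))
  simp only [mFourierLp, ← map_sum, ContinuousMap.inner_toLp, ContinuousMap.coe_sum,
    Finset.sum_apply, Complex.mul_conj', ← Complex.ofReal_pow, integral_complex_ofReal] at key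
  exact_mod_cast key

theorem mFourier_neg_apply_coe {δ : Type*} [Fintype δ] (n : δ → ℤ) (t : δ → ℝ) :
    mFourier (-n) (fun i => (t i : UnitAddCircle)) =
      Complex.exp (-(2 * π * Complex.I) * ∑ i, (n i * t i : ℝ)) := by
  simp only [mFourier, ContinuousMap.coe_mk, fourier_coe_apply, Pi.neg_apply, ← Complex.exp_sum]
  rw [Complex.ofReal_sum, Finset.mul_sum]
  congr 1
  refine Finset.sum_congr rfl fun i _ => ?_
  push_cast
  ring

theorem measurePreserving_haarCube (d : ℕ) :
    MeasurePreserving (fun (t : Fin d → ℝ) i => (t i : UnitAddCircle)) (haarCube d)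
      (Measure.pi fun _ => AddCircle.haarAddCircle) :=
  measurePreserving_pi _ _ fun _ => by
    simpa [AddCircle.volume_eq_smul_haarAddCircle] using AddCircle.measurePreserving_mk 1 0

theorem integral_haarCube_comp {d : ℕ} {E : Type*} [NormedAddCommGroup E] [NormedSpace ℝ E]
    {F : UnitAddTorus (Fin d) → E} (hF : Continuous F) :
    ∫ t, F (fun i => t i) ∂haarCube d =
      ∫ x, F x ∂(Measure.pi fun _ => AddCircle.haarAddCircle) := by
  rw [← (measurePreserving_haarCube d).map_eq,
    integral_map (measurePreserving_haarCube d).measurable.aemeasurable hF.aestronglyMeasurable]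

theorem integrable_haarCube_comp {d : ℕ} {E : Type*} [NormedAddCommGroup E]
    {F : UnitAddTorus (Fin d) → E} (hF : Continuous F) :
    Integrable (fun t => F (fun i => t i)) (haarCube d) :=
  ((measurePreserving_haarCube d).integrable_comp hF.aestronglyMeasurable).mpr
    (hF.integrable_of_hasCompactSupport (HasCompactSupport.of_compactSpace F))

theorem sum_count_eq_length {α : Type*} [Fintype α] [DecidableEq α] (l : List α) :
    ∑ a, l.count a = l.length := by
  simpa using Multiset.sum_count_eq_card (s := Finset.univ) (m := (l : Multiset α)) (by simp)

theorem sum_map_eq_sum_count_mul {α R : Type*} [Fintype α] [DecidableEq α] [Semiring R]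
    (l : List α) (t : α → R) :
    (l.map t).sum = ∑ a, (l.count a : R) * t a := by
  rw [Finset.sum_list_map_count]
  refine (Finset.sum_subset (Finset.subset_univ _) fun a _ ha => ?_).trans ?_
  · simp [List.count_eq_zero_of_not_mem (by simpa using ha)]
  · simp [nsmul_eq_mul]

def prefixCount {α : Type*} [DecidableEq α] (w : List α) (j : ℕ) : α → ℤ :=
  fun a => ((w.take j).count a : ℤ)

theorem prefixCount_injective {α : Type*} [Fintype α] [DecidableEq α] (w : List α) :
    Function.Injective fun j : Fin w.length => prefixCount w j := by
  intro j j' h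
  have hlen (k : Fin w.length) : ∑ a, (w.take k).count a = k := by
    rw [sum_count_eq_length, List.length_take, min_eq_left k.2.le]
  ext
  rw [← hlen j, ← hlen j']
  exact Finset.sum_congr rfl fun a _ => by simpa [prefixCount] using congrFun h a

theorem specMat_apply_eq_sum_mFourier {d : ℕ} (ζ : Fin d → List (Fin d)) (t : Fin d → ℝ)
    (b c : Fin d) :
    specMat ζ t b c = ∑ j ∈ Finset.univ.filter (fun j => (ζ b).get j = c),
      mFourier (-prefixCount (ζ b) j) (fun i => t i) := by
  rw [specMat, Finset.sum_filter]
  refine Finset.sum_congr rfl fun j _ => if_congr Iff.rfl ?_ rfl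
  rw [mFourier_neg_apply_coe, sum_map_eq_sum_count_mul]
  simp [prefixCount]

theorem integral_norm_sq_specMat {d : ℕ} (ζ : Fin d → List (Fin d)) (b c : Fin d) :
    ∫ t, ‖specMat ζ t b c‖ ^ 2 ∂haarCube d = (ζ b).count c := by
  set s := Finset.univ.filter fun j => (ζ b).get j = c
  set n := fun j : Fin (ζ b).length => -prefixCount (ζ b) j
  calc ∫ t, ‖specMat ζ t b c‖ ^ 2 ∂haarCube d
      = ∫ x, ‖∑ j ∈ s, mFourier (n j) x‖ ^ 2 ∂(Measure.pi fun _ => AddCircle.haarAddCircle) := by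
        simp_rw [specMat_apply_eq_sum_mFourier]
        exact integral_haarCube_comp (F := fun x => ‖∑ j ∈ s, mFourier (n j) x‖ ^ 2) (by fun_prop)
    _ = s.card := integral_norm_sq_sum_mFourier (neg_injective.comp (prefixCount_injective _)) s
    _ = (ζ b).count c := by
        exact_mod_cast Fin.card_filter_univ_eq_vector_get_eq_count c ⟨ζ b, rfl⟩

theorem integrable_norm_sq_specMat {d : ℕ} (ζ : Fin d → List (Fin d)) (b c : Fin d) :
    Integrable (fun t => ‖specMat ζ t b c‖ ^ 2) (haarCube d) := by
  simp_rw [specMat_apply_eq_sum_mFourier]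
  exact integrable_haarCube_comp
    (F := fun x => ‖∑ j ∈ Finset.univ.filter (fun j => (ζ b).get j = c),
      mFourier (-prefixCount (ζ b) j) x‖ ^ 2) (by fun_prop)

def frobNormSq {d : ℕ} (M : Matrix (Fin d) (Fin d) ℂ) : ℝ :=
  ∑ b, ∑ c, ‖M b c‖ ^ 2

theorem frobNormSq_nonneg {d : ℕ} (M : Matrix (Fin d) (Fin d) ℂ) : 0 ≤ frobNormSq M :=
  Finset.sum_nonneg fun _ _ => Finset.sum_nonneg fun _ _ => by positivity

theorem norm_sq_le_frobNormSq {d : ℕ} (M : Matrix (Fin d) (Fin d) ℂ) (b c : Fin d) :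
    ‖M b c‖ ^ 2 ≤ frobNormSq M :=
  calc ‖M b c‖ ^ 2 ≤ ∑ c, ‖M b c‖ ^ 2 :=
        Finset.single_le_sum (f := fun c => ‖M b c‖ ^ 2) (fun _ _ => by positivity)
          (Finset.mem_univ c)
    _ ≤ frobNormSq M := Finset.single_le_sum (f := fun b => ∑ c, ‖M b c‖ ^ 2)
        (fun _ _ => Finset.sum_nonneg fun _ _ => by positivity) (Finset.mem_univ b)

theorem sum_subMat_eq_sum_length {d : ℕ} (ζ : Fin d → List (Fin d)) :
    ∑ b, ∑ c, subMat ζ b c = ∑ b, ((ζ b).length : ℝ) := by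
  simp only [subMat]
  rw [Finset.sum_comm]
  exact Finset.sum_congr rfl fun b _ => by exact_mod_cast sum_count_eq_length (ζ b)

theorem length_le_sum_subMat {d : ℕ} (ζ : Fin d → List (Fin d)) (b : Fin d) :
    ((ζ b).length : ℝ) ≤ ∑ b, ∑ c, subMat ζ b c := by
  rw [sum_subMat_eq_sum_length]
  exact Finset.single_le_sum (f := fun b => ((ζ b).length : ℝ)) (fun _ _ => by positivity)
    (Finset.mem_univ b)

theorem integrable_frobNormSq_specMat {d : ℕ} (ζ : Fin d → List (Fin d)) :
    Integrable (fun t => frobNormSq (specMat ζ t)) (haarCube d) :=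
  integrable_finsetSum _ fun b _ => integrable_finsetSum _ fun c _ =>
    integrable_norm_sq_specMat ζ b c

theorem integral_frobNormSq_specMat {d : ℕ} (ζ : Fin d → List (Fin d)) :
    ∫ t, frobNormSq (specMat ζ t) ∂haarCube d = ∑ b, ∑ c, subMat ζ b c := by
  simp only [frobNormSq]
  rw [sum_subMat_eq_sum_length, integral_finsetSum _ fun b _ =>
    integrable_finsetSum _ fun c _ => integrable_norm_sq_specMat ζ b c]
  refine Finset.sum_congr rfl fun b _ => ?_
  rw [integral_finsetSum _ fun c _ => integrable_norm_sq_specMat ζ b c]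
  simp_rw [integral_norm_sq_specMat]
  exact_mod_cast sum_count_eq_length (ζ b)

theorem specMat_apply_ne_zero_of_length_le_two {d : ℕ} {ζ : Fin d → List (Fin d)}
    {t : Fin d → ℝ} {b x : Fin d} {w : List (Fin d)} (hb : ζ b = x :: w) (hw : w.length ≤ 1)
    (ht : 1 + Complex.exp (-(2 * π * Complex.I) * t x) ≠ 0) :
    specMat ζ t b x ≠ 0 := by
  rcases w with _ | ⟨y, _ | ⟨_, _⟩⟩
  · rw [specMat, hb]
    erw [Fin.sum_univ_succ]
    simp
  · rw [specMat, hb]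
    erw [Fin.sum_univ_two]
    by_cases hy : y = x
    · simpa [hy] using ht
    · simp [hy]
  · simp at hw

theorem ae_one_add_exp_ne_zero (d : ℕ) (x : Fin d) :
    ∀ᵐ t ∂haarCube d, 1 + Complex.exp (-(2 * π * Complex.I) * t x) ≠ 0 := by
  have hcount : {s : ℝ | 1 + Complex.exp (-(2 * π * Complex.I) * s) = 0}.Countable := by
    refine (Set.countable_range fun n : ℤ => (1 / 2 - n : ℝ)).mono fun s hs => ?_
    have h1 : Complex.exp (-(2 * π * Complex.I) * s + π * Complex.I) = 1 := by
      rw [Complex.exp_add, Complex.exp_pi_mul_I, ← neg_eq_of_add_eq_zero_right hs]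
      ring
    obtain ⟨n, hn⟩ := Complex.exp_eq_one_iff.mp h1
    refine ⟨n, Complex.ofReal_injective (mul_left_cancel₀ Complex.two_pi_I_ne_zero ?_)⟩
    push_cast
    linear_combination hn
  exact (measurePreserving_eval (fun _ => (volume : Measure ℝ).restrict (Set.Ioc 0 1)) x)
    |>.quasiMeasurePreserving.ae (ae_restrict_of_ae (hcount.ae_notMem volume))

theorem ae_frobNormSq_specMat_pos_of_length_le_two {d : ℕ} {ζ : Fin d → List (Fin d)}
    {b x : Fin d} {w : List (Fin d)} (hb : ζ b = x :: w) (hw : w.length ≤ 1) :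
    ∀ᵐ t ∂haarCube d, 0 < frobNormSq (specMat ζ t) := by
  filter_upwards [ae_one_add_exp_ne_zero d x] with t ht
  have := specMat_apply_ne_zero_of_length_le_two hb hw ht
  exact (by positivity : 0 < ‖specMat ζ t b x‖ ^ 2).trans_le (norm_sq_le_frobNormSq _ b x)

/-- `∫_{𝕋^d} log‖𝓜_ζ(t)‖_F dm_d(t) ≤ (1/2)·log(Σ_{b,c} S_ζ(b,c))`. -/
theorem stmt2 {d : ℕ} (hd : 0 < d) (ζ : Fin d → List (Fin d))
    (hζ : ∀ b, ζ b ≠ []) :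
    (∫ t, Real.log (frobNorm (specMat ζ t)) ∂(haarCube d)) ≤
      (1 / 2) * Real.log (∑ b, ∑ c, subMat ζ b c) := by
  obtain ⟨x, w, hw⟩ := List.exists_cons_of_ne_nil (hζ ⟨0, hd⟩)
  have hlen := length_le_sum_subMat ζ ⟨0, hd⟩
  rw [hw, List.length_cons, Nat.cast_succ, ← integral_frobNormSq_specMat] at hlen
  rw [← integral_frobNormSq_specMat]
  set S := ∫ t, frobNormSq (specMat ζ t) ∂haarCube d
  have hpos : (∀ᵐ t ∂haarCube d, 0 < frobNormSq (specMat ζ t)) ∨ 1 ≤ log S := by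
    by_cases hshort : w.length ≤ 1
    · exact .inl (ae_frobNormSq_specMat_pos_of_length_le_two hw hshort)
    · have : (2 : ℝ) ≤ w.length := by exact_mod_cast (by omega : 2 ≤ w.length)
      rw [le_log_iff_exp_le (by linarith)]
      exact .inr (by linarith [exp_one_lt_d9])
  calc ∫ t, log (frobNorm (specMat ζ t)) ∂haarCube d
      = (∫ t, log (frobNormSq (specMat ζ t)) ∂haarCube d) / 2 := by
        rw [← integral_div]
        exact integral_congr_ae (.of_forall fun t => log_sqrt (frobNormSq_nonneg _))
    _ ≤ log S / 2 := by
        gcongr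
        exact integral_log_le_log_integral (integrable_frobNormSq_specMat ζ)
          (.of_forall fun t => frobNormSq_nonneg _) (by linarith [w.length.cast_nonneg (α := ℝ)])
          hpos
    _ = 1 / 2 * log S := by ring
end
end

section
/- For any two substitutions ζ₁ and ζ₂ on the alphabet {1,…,d} and every t ∈ ℝ^d, the cocycle identity 𝓜_{ζ₁∘ζ₂}(t) = 𝓜_{ζ₂}(S_{ζ₁}^T t) · 𝓜_{ζ₁}(t) holds, where ζ₁∘ζ₂ is the composed substitution defined by applying ζ₁ letterwise (by concatenation) to each word ζ₂(b), and S_{ζ₁}^T denotes the transpose of the substitution matrix of ζ₁. -/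
open MeasureTheory Matrix

noncomputable section

/-- Composition of substitutions: `(ζ₁ ∘ ζ₂)(b)` is `ζ₁` applied letterwise
(by concatenation) to the word `ζ₂(b)`. -/
def subComp {d : ℕ} (ζ₁ ζ₂ : Fin d → List (Fin d)) : Fin d → List (Fin d) :=
  fun b => (ζ₂ b).flatMap ζ₁

def Fent {d : ℕ} (t : Fin d → ℝ) (w : List (Fin d)) (c : Fin d) : ℂ :=
  ∑ j : Fin w.length,
    if w.get j = c then
      Complex.exp (-(2 * Real.pi * Complex.I) * (((w.take (j : ℕ)).map t).sum : ℝ))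
    else 0

lemma Fent_nil {d : ℕ} (t : Fin d → ℝ) (c : Fin d) : Fent t [] c = 0 := by
  simp [Fent]

lemma Fent_cons {d : ℕ} (t : Fin d → ℝ) (a : Fin d) (w : List (Fin d)) (c : Fin d) :
    Fent t (a :: w) c =
      (if a = c then 1 else 0) +
        Complex.exp (-(2 * Real.pi * Complex.I) * (t a : ℝ)) * Fent t w c := by
  rw [Fent]
  have key := Fin.sum_univ_succ (n := w.length)
    (f := fun j : Fin (w.length + 1) =>
      if (a :: w).get j = c then
        Complex.exp (-(2 * Real.pi * Complex.I) * ((((a :: w).take (j : ℕ)).map t).sum : ℝ))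
      else 0)
  refine key.trans ?_
  simp only [List.get, Fin.val_zero, List.take_zero, List.map_nil, List.sum_nil]
  congr 1
  · simp
  · rw [Fent, Finset.mul_sum]
    refine Finset.sum_congr rfl fun j _ => ?_
    have : ((a :: w).take ((j.succ : Fin (w.length+1)) : ℕ)) = a :: w.take (j : ℕ) := rfl
    rw [this]
    simp only [List.map_cons, List.sum_cons, mul_ite, mul_zero]
    congr 1
    rw [← Complex.exp_add]
    push_cast
    ring_nf

lemma Fent_append {d : ℕ} (t : Fin d → ℝ) (u v : List (Fin d)) (c : Fin d) :
    Fent t (u ++ v) c =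
      Fent t u c +
        Complex.exp (-(2 * Real.pi * Complex.I) * ((u.map t).sum : ℝ)) * Fent t v c := by
  induction u with
  | nil => simp [Fent_nil]
  | cons a u ih =>
      rw [List.cons_append, Fent_cons, Fent_cons, ih]
      rw [List.map_cons, List.sum_cons]
      rw [mul_add, ← mul_assoc, ← Complex.exp_add]
      push_cast
      ring_nf

lemma sum_map_eq {d : ℕ} (t : Fin d → ℝ) (l : List (Fin d)) :
    (l.map t).sum = ∑ i : Fin d, (l.count i : ℝ) * t i := by
  induction l with
  | nil => simp
  | cons a l ih =>
      simp only [List.map_cons, List.sum_cons, ih, List.count_cons]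
      push_cast
      rw [Finset.sum_congr rfl (fun i _ => add_mul ((l.count i : ℝ)) _ (t i)),
        Finset.sum_add_distrib]
      have : (∑ x : Fin d, (if (a == x) = true then (1:ℝ) else 0) * t x) = t a := by
        simp [ite_mul]
      rw [this]; ring

lemma flatMap_sum {d : ℕ} (t : Fin d → ℝ) (ζ₁ : Fin d → List (Fin d)) (w : List (Fin d)) :
    ((w.flatMap ζ₁).map t).sum = (w.map (fun a => ((ζ₁ a).map t).sum)).sum := by
  induction w with
  | nil => simp
  | cons a w ih => simp [List.flatMap_cons, ih]

lemma Fent_flatMap {d : ℕ} (t : Fin d → ℝ) (ζ₁ : Fin d → List (Fin d))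
    (w : List (Fin d)) (c : Fin d) :
    Fent t (w.flatMap ζ₁) c =
      ∑ m : Fin w.length,
        Complex.exp (-(2 * Real.pi * Complex.I) *
            (((w.take (m : ℕ)).map (fun a => ((ζ₁ a).map t).sum)).sum : ℝ)) *
          Fent t (ζ₁ (w.get m)) c := by
  induction w with
  | nil => simp [Fent_nil]
  | cons a w ih =>
      rw [List.flatMap_cons, Fent_append, ih]
      have key := Fin.sum_univ_succ (n := w.length)
        (f := fun m : Fin (w.length + 1) =>
          Complex.exp (-(2 * Real.pi * Complex.I) *
              ((((a :: w).take (m : ℕ)).map (fun a => ((ζ₁ a).map t).sum)).sum : ℝ)) *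
            Fent t (ζ₁ ((a :: w).get m)) c)
      refine Eq.trans ?_ key.symm
      congr 1
      · simp
      · rw [Finset.mul_sum]
        refine Finset.sum_congr rfl fun m _ => ?_
        have h1 : ((a :: w).take ((m.succ : Fin (w.length+1)) : ℕ)) = a :: w.take (m : ℕ) := rfl
        have h2 : (a :: w).get m.succ = w.get m := rfl
        rw [h1, h2, ← mul_assoc, ← Complex.exp_add]
        simp only [List.map_cons, List.sum_cons]
        push_cast
        ring_nf

lemma specMat_eq_Fent {d : ℕ} (ζ : Fin d → List (Fin d)) (t : Fin d → ℝ) (b c : Fin d) :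
    specMat ζ t b c = Fent t (ζ b) c := rfl

/-- The cocycle identity `𝓜_{ζ₁∘ζ₂}(t) = 𝓜_{ζ₂}(S_{ζ₁}^T t) · 𝓜_{ζ₁}(t)`
for all substitutions `ζ₁, ζ₂` on `{1,…,d}` and all `t ∈ ℝ^d`. -/
theorem stmt3 {d : ℕ} (ζ₁ ζ₂ : Fin d → List (Fin d))
    (h₁ : ∀ b, ζ₁ b ≠ []) (h₂ : ∀ b, ζ₂ b ≠ []) (t : Fin d → ℝ) :
    specMat (subComp ζ₁ ζ₂) t =
      specMat ζ₂ ((subMat ζ₁)ᵀ.mulVec t) * specMat ζ₁ t := by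
  ext b c
  have ht' : (subMat ζ₁)ᵀ.mulVec t = fun a => ((ζ₁ a).map t).sum := by
    funext a
    rw [sum_map_eq]
    simp [Matrix.mulVec, dotProduct, subMat, Matrix.transpose]
  rw [Matrix.mul_apply]
  simp only [specMat_eq_Fent, ht']
  rw [subComp, Fent_flatMap]
  have key : ∀ x : Fin d,
      Fent (fun a => ((ζ₁ a).map t).sum) (ζ₂ b) x * Fent t (ζ₁ x) c =
        ∑ m : Fin (ζ₂ b).length,
          if (ζ₂ b).get m = x then
            Complex.exp (-(2 * Real.pi * Complex.I) *
                ((((ζ₂ b).take (m : ℕ)).map (fun a => ((ζ₁ a).map t).sum)).sum : ℝ)) *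
              Fent t (ζ₁ x) c
          else 0 := by
    intro x
    rw [Fent, Finset.sum_mul]
    exact Finset.sum_congr rfl fun m _ => by rw [ite_mul, zero_mul]
  rw [Finset.sum_congr rfl (fun x _ => key x), Finset.sum_comm]
  refine Finset.sum_congr rfl fun m _ => ?_
  rw [Finset.sum_ite_eq]
  simp
end
end

section
/- For every integer m ≥ 1, the double integral over (t₀,t₁) ∈ [0,1]² of log(3 + |1 + z₀ + ⋯ + z₀^{2m−1}|² + |1 + z₁ + ⋯ + z₁^{m²−1}|²), where z₀ = e^{−2πi t₀} and z₁ = e^{−2πi t₁}, is at most log(8(3+√5)) = 4 log 2 + log((3+√5)/2). -/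
open Real Complex

noncomputable section

/-!
Write `a = |1 - z|²` for `|z| = 1`. Since `(1 - z)(1 + z + ⋯ + z^{n-1}) = 1 - zⁿ`, the
geometric sum has `|1 + ⋯ + z^{n-1}|² ≤ 4 / a`, and for `a, b ∈ (0, 4]` one has
`3 + 4/a + 4/b ≤ (16/5)(1 + a)/a · (1 + b)/b`, which rearranges to `(4 - a)(4 - b) ≥ 0`.
So the integrand is at most `log (16/5) + φ(t₀) + φ(t₁)` with `φ = log (1 + a) - log a`.
By Jensen's formula `∫ log |1 - z| = 0`, and by concavity
`∫ log (1 + a) ≤ log (1 + ∫ a) = log 3`, so the integral is at most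
`log (16/5) + 2 log 3 = log (144/5) < log (8(3 + √5))`.
-/

open MeasureTheory Finset

theorem norm_geom_sum_mul_norm_sub_one_le {𝕜 : Type*} [NormedDivisionRing 𝕜] {w : 𝕜}
    (hw : ‖w‖ ≤ 1) (n : ℕ) : ‖∑ j ∈ range n, w ^ j‖ * ‖w - 1‖ ≤ 2 := by
  rw [← norm_mul, geom_sum_mul]
  calc ‖w ^ n - 1‖ ≤ ‖w ^ n‖ + ‖(1 : 𝕜)‖ := norm_sub_le _ _
    _ ≤ 1 + 1 := by
      rw [norm_pow, norm_one]
      gcongr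
      exact pow_le_one₀ (norm_nonneg w) hw
    _ = 2 := by norm_num

theorem three_add_le_of_mul_le_four {a b A B : ℝ} (ha : 0 < a) (ha4 : a ≤ 4) (hb : 0 < b)
    (hb4 : b ≤ 4) (hA : A * a ≤ 4) (hB : B * b ≤ 4) :
    3 + A + B ≤ 16 / 5 * ((1 + a) / a) * ((1 + b) / b) := by
  rw [show 16 / 5 * ((1 + a) / a) * ((1 + b) / b) = 16 * (1 + a) * (1 + b) / (5 * (a * b)) by
    field_simp, le_div_iff₀ (by positivity)]
  nlinarith [mul_le_mul_of_nonneg_right hA hb.le, mul_le_mul_of_nonneg_right hB ha.le,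
    mul_nonneg (sub_nonneg.2 ha4) (sub_nonneg.2 hb4)]

theorem log_three_add_norm_geom_sum_sq_le {𝕜 : Type*} [NormedDivisionRing 𝕜] {v w : 𝕜}
    (hv : ‖v‖ ≤ 1) (hw : ‖w‖ ≤ 1) (hv1 : v ≠ 1) (hw1 : w ≠ 1) (m n : ℕ) :
    Real.log (3 + ‖∑ j ∈ range m, v ^ j‖ ^ 2 + ‖∑ j ∈ range n, w ^ j‖ ^ 2) ≤
      Real.log (16 / 5) + (Real.log (1 + ‖v - 1‖ ^ 2) - 2 * Real.log ‖v - 1‖) +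
        (Real.log (1 + ‖w - 1‖ ^ 2) - 2 * Real.log ‖w - 1‖) := by
  have hv0 : 0 < ‖v - 1‖ := norm_pos_iff.2 (sub_ne_zero.2 hv1)
  have hw0 : 0 < ‖w - 1‖ := norm_pos_iff.2 (sub_ne_zero.2 hw1)
  have hv2 : ‖v - 1‖ ≤ 2 := (norm_sub_le _ _).trans (by rw [norm_one]; linarith)
  have hw2 : ‖w - 1‖ ≤ 2 := (norm_sub_le _ _).trans (by rw [norm_one]; linarith)
  have hA : ‖∑ j ∈ range m, v ^ j‖ ^ 2 * ‖v - 1‖ ^ 2 ≤ 4 := by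
    rw [← mul_pow, show (4 : ℝ) = 2 ^ 2 by norm_num]
    exact pow_le_pow_left₀ (by positivity) (norm_geom_sum_mul_norm_sub_one_le hv m) 2
  have hB : ‖∑ j ∈ range n, w ^ j‖ ^ 2 * ‖w - 1‖ ^ 2 ≤ 4 := by
    rw [← mul_pow, show (4 : ℝ) = 2 ^ 2 by norm_num]
    exact pow_le_pow_left₀ (by positivity) (norm_geom_sum_mul_norm_sub_one_le hw n) 2
  have hle := three_add_le_of_mul_le_four (pow_pos hv0 2) (by nlinarith) (pow_pos hw0 2)
    (by nlinarith) hA hB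
  have log_div_sq {x : ℝ} (hx : 0 < x) :
      Real.log ((1 + x ^ 2) / x ^ 2) = Real.log (1 + x ^ 2) - 2 * Real.log x := by
    rw [Real.log_div (by positivity) (by positivity), Real.log_pow, Nat.cast_ofNat]
  calc _ ≤ Real.log (16 / 5 * ((1 + ‖v - 1‖ ^ 2) / ‖v - 1‖ ^ 2) *
        ((1 + ‖w - 1‖ ^ 2) / ‖w - 1‖ ^ 2)) := Real.log_le_log (by positivity) hle
    _ = _ := by
      rw [Real.log_mul (by positivity) (by positivity),
        Real.log_mul (by positivity) (by positivity), log_div_sq hv0, log_div_sq hw0]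

theorem log_le_log_add_div_sub_one {c x : ℝ} (hc : 0 < c) (hx : 0 < x) :
    Real.log x ≤ Real.log c + x / c - 1 := by
  have h := Real.log_le_sub_one_of_pos (div_pos hx hc)
  rw [Real.log_div hx.ne' hc.ne'] at h
  linarith

theorem integral_integral_le_of_le_add {f : ℝ → ℝ → ℝ} {g h : ℝ → ℝ} {a b c : ℝ}
    (hab : a ≤ b) (hf : Continuous (Function.uncurry f)) (hg : IntervalIntegrable g volume a b)
    (hh : IntervalIntegrable h volume a b)
    (hfgh : ∀ s ∈ Set.Ioo a b, ∀ t ∈ Set.Ioo a b, f s t ≤ c + g s + h t) :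
    ∫ s in a..b, ∫ t in a..b, f s t ≤
      (b - a) * ((b - a) * c + (∫ s in a..b, g s) + ∫ t in a..b, h t) := by
  have hinner (s : ℝ) (hs : s ∈ Set.Ioo a b) :
      ∫ t in a..b, f s t ≤ (b - a) * (c + g s) + ∫ t in a..b, h t := by
    calc ∫ t in a..b, f s t ≤ ∫ t in a..b, (c + g s + h t) :=
          intervalIntegral.integral_mono_on_of_le_Ioo hab
            ((hf.uncurry_left s).intervalIntegrable _ _) (intervalIntegrable_const.add hh)
            (hfgh s hs)
      _ = (b - a) * (c + g s) + ∫ t in a..b, h t := by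
          rw [intervalIntegral.integral_add intervalIntegrable_const hh,
            intervalIntegral.integral_const, smul_eq_mul]
  calc ∫ s in a..b, ∫ t in a..b, f s t
      ≤ ∫ s in a..b, ((b - a) * (c + g s) + ∫ t in a..b, h t) :=
        intervalIntegral.integral_mono_on_of_le_Ioo hab
          ((intervalIntegral.continuous_parametric_intervalIntegral_of_continuous' hf a b)
            |>.intervalIntegrable _ _)
          (((intervalIntegrable_const.add hg).const_mul _).add intervalIntegrable_const) hinner
    _ = (b - a) * ((b - a) * c + (∫ s in a..b, g s) + ∫ t in a..b, h t) := by
        rw [intervalIntegral.integral_add ((intervalIntegrable_const.add hg).const_mul _)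
            intervalIntegrable_const, intervalIntegral.integral_const_mul,
          intervalIntegral.integral_add intervalIntegrable_const hg,
          intervalIntegral.integral_const, intervalIntegral.integral_const, smul_eq_mul,
          smul_eq_mul]
        ring

theorem integral_comp_circleMap_two_pi_mul (f : ℂ → ℝ) :
    ∫ t in (0 : ℝ)..1, f (circleMap 0 1 (2 * π * t)) = circleAverage f 0 1 := by
  rw [intervalIntegral.integral_comp_mul_left (fun θ => f (circleMap 0 1 θ)) (by positivity),
    circleAverage_def]
  simp

theorem CircleIntegrable.intervalIntegrable_comp_two_pi_mul {f : ℂ → ℝ}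
    (hf : CircleIntegrable f 0 1) :
    IntervalIntegrable (fun t => f (circleMap 0 1 (2 * π * t))) volume 0 1 := by
  simpa using hf.comp_mul_left (c := 2 * π)

theorem integral_sin_pi_mul_sq : ∫ t in (0 : ℝ)..1, Real.sin (π * t) ^ 2 = 1 / 2 := by
  rw [intervalIntegral.integral_comp_mul_left (fun x => Real.sin x ^ 2) (by positivity),
    integral_sin_sq]
  simp only [mul_zero, Real.sin_zero, Real.cos_zero, mul_one, Real.sin_pi, Real.cos_pi, mul_neg,
    neg_zero, sub_self, zero_add, sub_zero, smul_eq_mul, one_div]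
  field_simp

def expNegTwoPiI (t : ℝ) : ℂ := exp (-(2 * π * I) * t)

@[fun_prop]
theorem continuous_expNegTwoPiI : Continuous expNegTwoPiI := by
  unfold expNegTwoPiI
  fun_prop

theorem norm_expNegTwoPiI (t : ℝ) : ‖expNegTwoPiI t‖ = 1 := by
  simp [expNegTwoPiI, Complex.norm_exp]

theorem norm_expNegTwoPiI_sub_one (t : ℝ) :
    ‖expNegTwoPiI t - 1‖ = 2 * |Real.sin (π * t)| := by
  rw [expNegTwoPiI, show -(2 * π * I) * t = I * ↑(-(2 * π * t)) by push_cast; ring,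
    norm_exp_I_mul_ofReal_sub_one]
  simp [show -(2 * π * t) / 2 = -(π * t) by ring]

theorem norm_circleMap_two_pi_mul_sub_one (t : ℝ) :
    ‖circleMap 0 1 (2 * π * t) - 1‖ = 2 * |Real.sin (π * t)| := by
  rw [circleMap_zero,
    show ((1 : ℝ) : ℂ) * exp (↑(2 * π * t) * I) = exp (I * ↑(2 * π * t)) by
      push_cast; ring_nf,
    norm_exp_I_mul_ofReal_sub_one]
  simp [show 2 * π * t / 2 = π * t by ring]

theorem expNegTwoPiI_ne_one {t : ℝ} (ht : t ∈ Set.Ioo (0 : ℝ) 1) : expNegTwoPiI t ≠ 1 := by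
  intro h
  have hsin : 0 < Real.sin (π * t) :=
    Real.sin_pos_of_pos_of_lt_pi (by nlinarith [pi_pos, ht.1]) (by nlinarith [pi_pos, ht.2])
  have := norm_expNegTwoPiI_sub_one t
  rw [h, sub_self, norm_zero, abs_of_pos hsin] at this
  linarith

theorem intervalIntegrable_log_norm_expNegTwoPiI_sub_one :
    IntervalIntegrable (fun t => Real.log ‖expNegTwoPiI t - 1‖) volume 0 1 := by
  simpa only [norm_expNegTwoPiI_sub_one, ← norm_circleMap_two_pi_mul_sub_one] using
    (circleIntegrable_log_norm_sub_const (a := 1) (c := 0) 1).intervalIntegrable_comp_two_pi_mul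

theorem integral_log_norm_expNegTwoPiI_sub_one :
    ∫ t in (0:ℝ)..1, Real.log ‖expNegTwoPiI t - 1‖ = 0 := by
  simp_rw [norm_expNegTwoPiI_sub_one, ← norm_circleMap_two_pi_mul_sub_one]
  rw [integral_comp_circleMap_two_pi_mul (fun w => Real.log ‖w - 1‖)]
  exact circleAverage_log_norm_sub_const₁ (by simp)

theorem intervalIntegrable_log_one_add_norm_expNegTwoPiI_sub_one_sq :
    IntervalIntegrable (fun t => Real.log (1 + ‖expNegTwoPiI t - 1‖ ^ 2)) volume 0 1 :=
  (Continuous.log (by fun_prop) fun t => by positivity).intervalIntegrable _ _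

theorem integral_log_one_add_norm_expNegTwoPiI_sub_one_sq_le :
    ∫ t in (0:ℝ)..1, Real.log (1 + ‖expNegTwoPiI t - 1‖ ^ 2) ≤ Real.log 3 := by
  calc ∫ t in (0:ℝ)..1, Real.log (1 + ‖expNegTwoPiI t - 1‖ ^ 2)
      ≤ ∫ t in (0:ℝ)..1, (Real.log 3 - 2 / 3 + 4 / 3 * Real.sin (π * t) ^ 2) := by
        refine intervalIntegral.integral_mono_on zero_le_one
          intervalIntegrable_log_one_add_norm_expNegTwoPiI_sub_one_sq
          ((by fun_prop : Continuous _).intervalIntegrable _ _) fun t _ => ?_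
        have := log_le_log_add_div_sub_one (c := 3) (by norm_num)
          (by positivity : 0 < 1 + ‖expNegTwoPiI t - 1‖ ^ 2)
        rw [norm_expNegTwoPiI_sub_one, mul_pow, sq_abs] at this ⊢
        linarith
    _ = Real.log 3 := by
        rw [intervalIntegral.integral_add intervalIntegrable_const
          ((by fun_prop : Continuous _).intervalIntegrable _ _),
          intervalIntegral.integral_const_mul, integral_sin_pi_mul_sq,
          intervalIntegral.integral_const, sub_zero, one_smul]
        ring

theorem stmt14_general (m : ℕ) :
    (∫ t₀ in (0:ℝ)..1, ∫ t₁ in (0:ℝ)..1,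
      Real.log (3 +
        ‖∑ j ∈ Finset.range (2 * m),
          Complex.exp (-(2 * Real.pi * Complex.I) * (t₀ : ℂ)) ^ j‖ ^ 2 +
        ‖∑ j ∈ Finset.range (m ^ 2),
          Complex.exp (-(2 * Real.pi * Complex.I) * (t₁ : ℂ)) ^ j‖ ^ 2)) ≤
      Real.log (8 * (3 + Real.sqrt 5)) ∧
    Real.log (8 * (3 + Real.sqrt 5)) =
      4 * Real.log 2 + Real.log ((3 + Real.sqrt 5) / 2) := by
  refine ⟨?_, ?_⟩
  · set φ : ℝ → ℝ := fun t =>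
      Real.log (1 + ‖expNegTwoPiI t - 1‖ ^ 2) - 2 * Real.log ‖expNegTwoPiI t - 1‖
    have hφ : IntervalIntegrable φ volume 0 1 :=
      intervalIntegrable_log_one_add_norm_expNegTwoPiI_sub_one_sq.sub
        (intervalIntegrable_log_norm_expNegTwoPiI_sub_one.const_mul 2)
    have hφ_le : ∫ t in (0:ℝ)..1, φ t ≤ Real.log 3 := by
      rw [intervalIntegral.integral_sub intervalIntegrable_log_one_add_norm_expNegTwoPiI_sub_one_sq
        (intervalIntegrable_log_norm_expNegTwoPiI_sub_one.const_mul 2),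
        intervalIntegral.integral_const_mul, integral_log_norm_expNegTwoPiI_sub_one, mul_zero,
        sub_zero]
      exact integral_log_one_add_norm_expNegTwoPiI_sub_one_sq_le
    calc _ ≤ (1 - 0) * ((1 - 0) * Real.log (16 / 5) + (∫ s in (0:ℝ)..1, φ s) +
          ∫ t in (0:ℝ)..1, φ t) :=
          integral_integral_le_of_le_add zero_le_one
            (Continuous.log (by fun_prop) fun p => by positivity) hφ hφ
            fun s hs t ht => log_three_add_norm_geom_sum_sq_le (norm_expNegTwoPiI s).le
              (norm_expNegTwoPiI t).le (expNegTwoPiI_ne_one hs) (expNegTwoPiI_ne_one ht) _ _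
      _ ≤ Real.log (16 / 5) + Real.log 3 + Real.log 3 := by linarith
      _ = Real.log (144 / 5) := by
          rw [← Real.log_mul (by norm_num) (by norm_num),
            ← Real.log_mul (by norm_num) (by norm_num)]
          norm_num
      _ ≤ Real.log (8 * (3 + Real.sqrt 5)) :=
          Real.log_le_log (by norm_num)
            (by nlinarith [Real.sq_sqrt (show (0:ℝ) ≤ 5 by norm_num), Real.sqrt_nonneg 5])
  · rw [show 8 * (3 + √5) = 2 ^ 4 * ((3 + √5) / 2) by ring,
      Real.log_mul (by positivity) (by positivity), Real.log_pow]
    norm_num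

/-- For every integer `m ≥ 1`,
`∫∫_{[0,1]²} log(3 + |1+z₀+⋯+z₀^{2m−1}|² + |1+z₁+⋯+z₁^{m²−1}|²) dt₀ dt₁ ≤ log(8(3+√5))`,
where `z_j = e^{−2πi t_j}`; moreover `log(8(3+√5)) = 4 log 2 + log((3+√5)/2)`. -/
theorem stmt14 (m : ℕ) (hm : 1 ≤ m) :
    (∫ t₀ in (0:ℝ)..1, ∫ t₁ in (0:ℝ)..1,
      Real.log (3 +
        ‖∑ j ∈ Finset.range (2 * m),
          Complex.exp (-(2 * Real.pi * Complex.I) * (t₀ : ℂ)) ^ j‖ ^ 2 +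
        ‖∑ j ∈ Finset.range (m ^ 2),
          Complex.exp (-(2 * Real.pi * Complex.I) * (t₁ : ℂ)) ^ j‖ ^ 2)) ≤
      Real.log (8 * (3 + Real.sqrt 5)) ∧
    Real.log (8 * (3 + Real.sqrt 5)) =
      4 * Real.log 2 + Real.log ((3 + Real.sqrt 5) / 2) :=
  stmt14_general m
end
end
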